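/- arXiv:2109.10116 — 2 statements merged into one kernel-verified Lean document; each statement's English description precedes it below -/
import Mathlib

section
/- There is an absolute constant c_2 > 0 such that for all n ≥ 1 and all real numbers a_1,...,a_n, ∫_0^1 max_{1 ≤ k ≤ n} |Σ_{j=1}^k a_j r_j(x)| dx ≤ c_2 (Σ_{j=1}^n a_j²)^{1/2}, where r_j is the j-th Rademacher function. -/
open Real MeasureTheory

/-- Sup norm of `f` on `[0, 2π]`. -/
noncomputable def supNorm (f : ℝ → ℝ) : ℝ := ⨆ x : Set.Icc (0:ℝ) (2*π), |f (x : ℝ)|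

/-- L¹ norm of `f` on `(0, 2π)`. -/
noncomputable def l1Norm (f : ℝ → ℝ) : ℝ := ∫ x in (0:ℝ)..(2*π), |f x|

/-- `f` is a real trigonometric polynomial of degree at most `r`. -/
def IsTrigPoly (r : ℝ) (f : ℝ → ℝ) : Prop :=
  ∃ (A : ℝ) (a b : ℕ → ℝ), f = fun x =>
    A + ∑ k ∈ Finset.Icc 1 ⌊r⌋₊, (a k * Real.cos ((k:ℝ) * x) + b k * Real.sin ((k:ℝ) * x))

/-- The `n`-th Rademacher function. -/
noncomputable def rademacher (n : ℕ) (x : ℝ) : ℝ := Real.sign (Real.sin (2^n * π * x))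

noncomputable def aCoeff (f : ℝ → ℝ) (k : ℕ) : ℝ :=
  (1/π) * ∫ x in (0:ℝ)..(2*π), f x * Real.cos ((k:ℝ)*x)

noncomputable def bCoeff (f : ℝ → ℝ) (k : ℕ) : ℝ :=
  (1/π) * ∫ x in (0:ℝ)..(2*π), f x * Real.sin ((k:ℝ)*x)

/-- The `n`-th dyadic block of the Fourier series of `f`. -/
noncomputable def delta (f : ℝ → ℝ) (n : ℕ) (x : ℝ) : ℝ :=
  if n = 0 then aCoeff f 0 / 2
  else ∑ k ∈ Finset.Ico (2^(n-1)) (2^n),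
    (aCoeff f k * Real.cos ((k:ℝ)*x) + bCoeff f k * Real.sin ((k:ℝ)*x))

/-- The QC-norm of Kashin and Temlyakov. -/
noncomputable def qcNorm (f : ℝ → ℝ) : ℝ :=
  ∫ ω in (0:ℝ)..1, supNorm (fun x => ∑' n : ℕ, rademacher n ω * delta f n x)

/-!
On each dyadic interval `(i / 2 ^ n, (i + 1) / 2 ^ n)` the functions `r_1, …, r_n` are constant,
with signs given by the binary digits of `i`, so the integral is an average over the `2 ^ n` sign
patterns. Flipping the digit that belongs to `r_{k+1}` fixes `S_k` and its running maximum `M_k`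
and negates the increment `a_{k+1} r_{k+1}`; since `|x + d| + |x - d| ≥ 2 |x|`, this gives
`E[(|S_{k+1}| - |S_k|) M_k] ≥ 0`. Summed against the pathwise inequality
`M_n² + 2 ∑_k (|S_{k+1}| - |S_k|) M_k ≤ 2 |S_n| M_n` and combined with Cauchy–Schwarz this is
Doob's inequality `E M_n² ≤ 4 E S_n² = 4 ∑ a_j²`, and a last Cauchy–Schwarz gives `c_2 = 2`.
-/

open Finset

noncomputable def runMaxAbs (s : ℕ → ℝ) : ℕ → ℝ
  | 0 => 0
  | k + 1 => max (runMaxAbs s k) |s (k + 1)|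

lemma runMaxAbs_nonneg (s : ℕ → ℝ) : ∀ k, 0 ≤ runMaxAbs s k
  | 0 => le_rfl
  | k + 1 => (runMaxAbs_nonneg s k).trans (le_max_left _ _)

lemma runMaxAbs_congr {s t : ℕ → ℝ} : ∀ {K : ℕ}, (∀ k ≤ K, s k = t k) →
    runMaxAbs s K = runMaxAbs t K
  | 0, _ => rfl
  | K + 1, h => by
    rw [runMaxAbs, runMaxAbs, runMaxAbs_congr fun k hk => h k (by omega), h (K + 1) le_rfl]

lemma runMaxAbs_eq_sup' (s : ℕ → ℝ) {K : ℕ} (hK : 1 ≤ K) :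
    runMaxAbs s K = (Icc 1 K).sup' (nonempty_Icc.mpr hK) fun k => |s k| := by
  induction K, hK using Nat.le_induction with
  | base => simp [runMaxAbs]
  | succ K hK ih =>
    rw [runMaxAbs, ih, max_comm,
      sup'_congr _ (insert_Icc_right_eq_Icc_add_one (by omega)).symm fun _ _ => rfl, sup'_insert]

-- When the running maximum jumps from `m` to `t = |s (K + 1)|`, the right side gains `(t - m) ^ 2`
-- more than the left; otherwise both gain the same.
lemma sq_runMaxAbs_add_le (s : ℕ → ℝ) : ∀ K : ℕ,
    runMaxAbs s K ^ 2 + 2 * ∑ k ∈ range K, (|s (k + 1)| - |s k|) * runMaxAbs s k ≤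
      2 * |s K| * runMaxAbs s K
  | 0 => by simp [runMaxAbs]
  | K + 1 => by
    have ih := sq_runMaxAbs_add_le s K
    rw [sum_range_succ, runMaxAbs]
    rcases le_total |s (K + 1)| (runMaxAbs s K) with h | h
    · rw [max_eq_left h]
      linarith
    · rw [max_eq_right h]
      nlinarith [sq_nonneg (|s (K + 1)| - runMaxAbs s K)]

lemma sum_sq_runMaxAbs_le {ι : Type*} (Ω : Finset ι) (s : ι → ℕ → ℝ) (K : ℕ)
    (hsub : ∀ k < K, 0 ≤ ∑ ω ∈ Ω, (|s ω (k + 1)| - |s ω k|) * runMaxAbs (s ω) k) :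
    ∑ ω ∈ Ω, runMaxAbs (s ω) K ^ 2 ≤ 4 * ∑ ω ∈ Ω, s ω K ^ 2 := by
  set X := ∑ ω ∈ Ω, runMaxAbs (s ω) K ^ 2
  set Y := ∑ ω ∈ Ω, |s ω K| * runMaxAbs (s ω) K
  set B := ∑ ω ∈ Ω, s ω K ^ 2
  have hX : 0 ≤ X := sum_nonneg fun _ _ => sq_nonneg _
  have hB : 0 ≤ B := sum_nonneg fun _ _ => sq_nonneg _
  have hXY : X ≤ 2 * Y := by
    have hpath := sum_le_sum fun ω (_ : ω ∈ Ω) => sq_runMaxAbs_add_le (s ω) K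
    have hcorr : 0 ≤ ∑ ω ∈ Ω, ∑ k ∈ range K, (|s ω (k + 1)| - |s ω k|) * runMaxAbs (s ω) k := by
      rw [sum_comm]
      exact sum_nonneg fun k hk => hsub k (mem_range.mp hk)
    simp only [sum_add_distrib, ← mul_sum, mul_assoc] at hpath
    linarith
  have hCS : Y ^ 2 ≤ B * X := by
    simpa only [sq_abs] using
      sum_mul_sq_le_sq_mul_sq Ω (fun ω => |s ω K|) fun ω => runMaxAbs (s ω) K
  nlinarith

lemma sum_runMaxAbs_le {ι : Type*} (Ω : Finset ι) (s : ι → ℕ → ℝ) (K : ℕ)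
    (hsub : ∀ k < K, 0 ≤ ∑ ω ∈ Ω, (|s ω (k + 1)| - |s ω k|) * runMaxAbs (s ω) k) :
    ∑ ω ∈ Ω, runMaxAbs (s ω) K ≤ 2 * √(#Ω * ∑ ω ∈ Ω, s ω K ^ 2) := by
  have hsq : (∑ ω ∈ Ω, runMaxAbs (s ω) K) ^ 2 ≤ 2 ^ 2 * (#Ω * ∑ ω ∈ Ω, s ω K ^ 2) :=
    calc (∑ ω ∈ Ω, runMaxAbs (s ω) K) ^ 2
        ≤ #Ω * ∑ ω ∈ Ω, runMaxAbs (s ω) K ^ 2 := sq_sum_le_card_mul_sum_sq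
      _ ≤ #Ω * (4 * ∑ ω ∈ Ω, s ω K ^ 2) := by gcongr; exact sum_sq_runMaxAbs_le Ω s K hsub
      _ = 2 ^ 2 * (#Ω * ∑ ω ∈ Ω, s ω K ^ 2) := by ring
  calc ∑ ω ∈ Ω, runMaxAbs (s ω) K
      ≤ √(2 ^ 2 * (#Ω * ∑ ω ∈ Ω, s ω K ^ 2)) := (le_abs_self _).trans (abs_le_sqrt hsq)
    _ = 2 * √(#Ω * ∑ ω ∈ Ω, s ω K ^ 2) := by
      rw [Real.sqrt_mul (by norm_num), Real.sqrt_sq zero_le_two]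

section Symmetrization

variable {ι : Type*} {Ω : Finset ι} {σ : ι → ι}

lemma Finset.sum_comp_of_involutive {M : Type*} [AddCommMonoid M] (hσ : Function.Involutive σ)
    (hΩ : ∀ ω ∈ Ω, σ ω ∈ Ω) (f : ι → M) : ∑ ω ∈ Ω, f (σ ω) = ∑ ω ∈ Ω, f ω :=
  sum_nbij' σ σ hΩ hΩ (fun ω _ => hσ ω) (fun ω _ => hσ ω) fun _ _ => rfl

lemma sum_mul_eq_zero_of_involutive (hσ : Function.Involutive σ) (hΩ : ∀ ω ∈ Ω, σ ω ∈ Ω)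
    {x d : ι → ℝ} (hx : ∀ ω, x (σ ω) = x ω) (hd : ∀ ω, d (σ ω) = -d ω) :
    ∑ ω ∈ Ω, x ω * d ω = 0 := by
  have h := sum_comp_of_involutive hσ hΩ fun ω => x ω * d ω
  simp only [hx, hd, mul_neg, sum_neg_distrib] at h
  linarith

lemma sum_abs_add_sub_abs_mul_nonneg (hσ : Function.Involutive σ) (hΩ : ∀ ω ∈ Ω, σ ω ∈ Ω)
    {x d w : ι → ℝ} (hx : ∀ ω, x (σ ω) = x ω) (hd : ∀ ω, d (σ ω) = -d ω)
    (hw : ∀ ω, w (σ ω) = w ω) (hw₀ : ∀ ω, 0 ≤ w ω) :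
    0 ≤ ∑ ω ∈ Ω, (|x ω + d ω| - |x ω|) * w ω := by
  have h := sum_comp_of_involutive hσ hΩ fun ω => (|x ω + d ω| - |x ω|) * w ω
  simp only [hx, hd, hw] at h
  have hpair : 0 ≤ ∑ ω ∈ Ω, ((|x ω + -d ω| - |x ω|) * w ω + (|x ω + d ω| - |x ω|) * w ω) := by
    refine sum_nonneg fun ω _ => ?_
    have htri : |2 * x ω| ≤ |x ω + -d ω| + |x ω + d ω| := by
      simpa [two_mul, add_add_add_comm] using abs_add_le (x ω + -d ω) (x ω + d ω)
    rw [abs_mul, abs_two] at htri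
    nlinarith [hw₀ ω]
  rw [sum_add_distrib, h] at hpair
  linarith

end Symmetrization

-- The value of `rademacher j` on `(i / 2 ^ n, (i + 1) / 2 ^ n)` when `j ≤ n`: bit `n - j` of `i`
-- is the parity of `⌊2 ^ j x⌋`.
noncomputable def dyadicSign (n j i : ℕ) : ℝ := if i.testBit (n - j) then -1 else 1

noncomputable def dyadicSum (n : ℕ) (a : ℕ → ℝ) (k i : ℕ) : ℝ :=
  ∑ j ∈ Icc 1 k, a j * dyadicSign n j i

lemma dyadicSign_sq (n j i : ℕ) : dyadicSign n j i ^ 2 = 1 := by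
  unfold dyadicSign; split_ifs <;> norm_num

lemma dyadicSign_xor_two_pow_self (n j i : ℕ) :
    dyadicSign n j (i ^^^ 2 ^ (n - j)) = -dyadicSign n j i := by
  unfold dyadicSign
  rw [Nat.testBit_xor, Nat.testBit_two_pow_self]
  cases i.testBit (n - j) <;> simp

lemma dyadicSign_xor_two_pow_of_ne {n j k : ℕ} (hj : j ≤ n) (hk : k ≤ n) (hjk : j ≠ k) (i : ℕ) :
    dyadicSign n j (i ^^^ 2 ^ (n - k)) = dyadicSign n j i := by
  unfold dyadicSign
  rw [Nat.testBit_xor, Nat.testBit_two_pow_of_ne (by omega), Bool.xor_false]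

lemma dyadicSum_succ {n : ℕ} (a : ℕ → ℝ) (k i : ℕ) :
    dyadicSum n a (k + 1) i = dyadicSum n a k i + a (k + 1) * dyadicSign n (k + 1) i :=
  sum_Icc_succ_top (by omega) _

lemma dyadicSum_xor_two_pow {n k m : ℕ} (hk : k ≤ n) (hm : m < k) (a : ℕ → ℝ) (i : ℕ) :
    dyadicSum n a m (i ^^^ 2 ^ (n - k)) = dyadicSum n a m i :=
  sum_congr rfl fun j hj => by
    rw [dyadicSign_xor_two_pow_of_ne (by grind) hk (by grind)]

lemma xor_two_pow_mem_range {n k i : ℕ} (hk : k < n) (hi : i ∈ range (2 ^ n)) :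
    i ^^^ 2 ^ (n - (k + 1)) ∈ range (2 ^ n) :=
  mem_range.mpr (Nat.xor_lt_two_pow (mem_range.mp hi) (Nat.pow_lt_pow_right one_lt_two (by omega)))

lemma Nat.xor_right_involutive (b : ℕ) : Function.Involutive (· ^^^ b) :=
  fun i => Nat.xor_xor_cancel_right i b

lemma sum_sq_dyadicSum {n : ℕ} (a : ℕ → ℝ) {K : ℕ} (hK : K ≤ n) :
    ∑ i ∈ range (2 ^ n), dyadicSum n a K i ^ 2 = 2 ^ n * ∑ j ∈ Icc 1 K, a j ^ 2 := by
  induction K with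
  | zero => simp [dyadicSum]
  | succ K ih =>
    replace hK : K < n := hK
    have hcross :
        ∑ i ∈ range (2 ^ n), dyadicSum n a K i * (a (K + 1) * dyadicSign n (K + 1) i) = 0 :=
      sum_mul_eq_zero_of_involutive (Nat.xor_right_involutive _) (fun i => xor_two_pow_mem_range hK)
        (dyadicSum_xor_two_pow (k := K + 1) hK K.lt_succ_self a) fun i => by
          rw [dyadicSign_xor_two_pow_self, mul_neg]
    simp only [dyadicSum_succ, add_sq, mul_pow, dyadicSign_sq, sum_add_distrib]
    rw [ih (by omega), sum_Icc_succ_top (by omega)]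
    simp only [mul_assoc, ← mul_sum, hcross, mul_zero, add_zero, mul_one, sum_const, card_range,
      nsmul_eq_mul, Nat.cast_pow, Nat.cast_ofNat]
    ring

lemma sum_abs_dyadicSum_succ_sub_mul_nonneg {n : ℕ} (a : ℕ → ℝ) {k : ℕ} (hk : k < n) :
    0 ≤ ∑ i ∈ range (2 ^ n), (|dyadicSum n a (k + 1) i| - |dyadicSum n a k i|) *
      runMaxAbs (fun m => dyadicSum n a m i) k := by
  simp only [dyadicSum_succ]
  exact sum_abs_add_sub_abs_mul_nonneg (Nat.xor_right_involutive _)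
    (fun i => xor_two_pow_mem_range hk)
    (dyadicSum_xor_two_pow (k := k + 1) hk k.lt_succ_self a)
    (fun i => by rw [dyadicSign_xor_two_pow_self, mul_neg])
    (fun i => runMaxAbs_congr fun m hm => dyadicSum_xor_two_pow (k := k + 1) hk (by omega) a i)
    fun i => runMaxAbs_nonneg _ k

lemma sum_runMaxAbs_dyadicSum_le (n : ℕ) (a : ℕ → ℝ) :
    ∑ i ∈ range (2 ^ n), runMaxAbs (fun k => dyadicSum n a k i) n ≤
      2 ^ n * (2 * √(∑ j ∈ Icc 1 n, a j ^ 2)) := by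
  have h := sum_runMaxAbs_le (range (2 ^ n)) (fun i k => dyadicSum n a k i) n
    fun k hk => sum_abs_dyadicSum_succ_sub_mul_nonneg a hk
  rw [sum_sq_dyadicSum a le_rfl, card_range, Nat.cast_pow, Nat.cast_ofNat, ← mul_assoc,
    Real.sqrt_mul (by positivity), ← pow_two, Real.sqrt_sq (by positivity)] at h
  linarith

lemma rademacher_eq_neg_one_pow {j q : ℕ} {x : ℝ} (hx : 2 ^ j * x ∈ Set.Ioo (q : ℝ) (q + 1)) :
    rademacher j x = (-1) ^ q := by
  have hpos : 0 < sin ((2 ^ j * x - q) * π) :=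
    sin_pos_of_pos_of_lt_pi (by nlinarith [hx.1, pi_pos]) (by nlinarith [hx.2, pi_pos])
  rw [rademacher, show 2 ^ j * π * x = (2 ^ j * x - q) * π + q * π by ring, sin_add_nat_mul_pi]
  rcases neg_one_pow_eq_or ℝ q with h | h <;>
    simp [h, Real.sign_of_pos hpos, Real.sign_of_neg (neg_neg_iff_pos.mpr hpos)]

lemma Nat.div_mem_Ioo {N i : ℕ} (hN : 0 < N) {y : ℝ}
    (hy : y ∈ Set.Ioo ((i : ℝ) / N) ((i + 1) / N)) :
    y ∈ Set.Ioo ((i / N : ℕ) : ℝ) ((i / N : ℕ) + 1) := by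
  have hsucc : i + 1 ≤ (i / N + 1) * N := by
    rw [add_mul, one_mul]
    exact Nat.lt_div_mul_add hN
  refine ⟨Nat.cast_div_le.trans_lt hy.1, hy.2.trans_le ?_⟩
  rw [div_le_iff₀ (by positivity)]
  exact_mod_cast hsucc

lemma dyadicSign_eq_neg_one_pow (n j i : ℕ) : dyadicSign n j i = (-1) ^ (i / 2 ^ (n - j)) := by
  rw [dyadicSign, Nat.testBit_eq_decide_div_mod_eq, neg_one_pow_eq_pow_mod_two]
  rcases Nat.mod_two_eq_zero_or_one (i / 2 ^ (n - j)) with h | h <;> simp [h]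

lemma rademacher_eq_dyadicSign {n j i : ℕ} (hj : j ≤ n) {x : ℝ}
    (hx : x ∈ Set.Ioo ((i : ℝ) / 2 ^ n) ((i + 1) / 2 ^ n)) :
    rademacher j x = dyadicSign n j i := by
  rw [dyadicSign_eq_neg_one_pow]
  apply rademacher_eq_neg_one_pow
  apply Nat.div_mem_Ioo (by positivity)
  have hsplit : (2 : ℝ) ^ n = 2 ^ (n - j) * 2 ^ j := by rw [← pow_add, Nat.sub_add_cancel hj]
  rw [hsplit, ← div_div, ← div_div] at hx
  push_cast
  exact ⟨(div_lt_iff₀' (by positivity)).mp hx.1, (lt_div_iff₀' (by positivity)).mp hx.2⟩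

lemma intervalIntegrable_of_eqOn_Ioo {g : ℝ → ℝ} {a b c : ℝ} (hab : a ≤ b)
    (hg : Set.EqOn g (fun _ => c) (Set.Ioo a b)) : IntervalIntegrable g volume a b :=
  (intervalIntegrable_iff_integrableOn_Ioo_of_le hab).mpr <|
    (integrableOn_const measure_Ioo_lt_top.ne).congr_fun hg.symm measurableSet_Ioo

lemma integral_eq_of_eqOn_Ioo {g : ℝ → ℝ} {a b c : ℝ} (hab : a ≤ b)
    (hg : Set.EqOn g (fun _ => c) (Set.Ioo a b)) : ∫ x in a..b, g x = (b - a) * c := by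
  rw [intervalIntegral.integral_of_le hab, integral_Ioc_eq_integral_Ioo,
    setIntegral_congr_fun measurableSet_Ioo hg, setIntegral_const, Real.volume_real_Ioo_of_le hab,
    smul_eq_mul]

lemma integral_zero_one_eq_sum_div {g : ℝ → ℝ} {N : ℕ} (hN : 0 < N) (c : ℕ → ℝ)
    (hg : ∀ i < N, Set.EqOn g (fun _ => c i) (Set.Ioo ((i : ℝ) / N) ((i + 1) / N))) :
    ∫ x in (0 : ℝ)..1, g x = (∑ i ∈ range N, c i) / N := by
  have hle : ∀ i : ℕ, (i : ℝ) / N ≤ ((i + 1 : ℕ) : ℝ) / N := fun i => by gcongr; simp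
  have hg' : ∀ i < N, Set.EqOn g (fun _ => c i) (Set.Ioo ((i : ℝ) / N) (((i + 1 : ℕ) : ℝ) / N)) :=
    fun i hi => by simpa using hg i hi
  have hsum := intervalIntegral.sum_integral_adjacent_intervals (a := fun i : ℕ => (i : ℝ) / N)
    fun i hi => intervalIntegrable_of_eqOn_Ioo (hle i) (hg' i hi)
  simp only [Nat.cast_zero, zero_div, div_self (by positivity : (N : ℝ) ≠ 0)] at hsum
  rw [← hsum, sum_div]
  refine sum_congr rfl fun i hi => ?_
  rw [integral_eq_of_eqOn_Ioo (hle i) (hg' i (mem_range.mp hi))]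
  field_simp
  push_cast
  ring

/-- Maximal inequality in L¹ for partial sums of Rademacher sums. -/
theorem rademacher_maximal : ∃ c : ℝ, 0 < c ∧ ∀ (n : ℕ) (hn : 1 ≤ n) (a : ℕ → ℝ),
    (∫ x in (0:ℝ)..1, (Finset.Icc 1 n).sup' (Finset.nonempty_Icc.mpr hn)
        (fun k => |∑ j ∈ Finset.Icc 1 k, a j * rademacher j x|)) ≤
      c * Real.sqrt (∑ j ∈ Finset.Icc 1 n, (a j)^2) := by
  refine ⟨2, two_pos, fun n hn a => ?_⟩
  have hstep : ∀ i < 2 ^ n, Set.EqOn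
      (fun x => (Icc 1 n).sup' (nonempty_Icc.mpr hn) fun k => |∑ j ∈ Icc 1 k, a j * rademacher j x|)
      (fun _ => runMaxAbs (fun k => dyadicSum n a k i) n)
      (Set.Ioo ((i : ℝ) / (2 ^ n : ℕ)) ((i + 1) / (2 ^ n : ℕ))) := by
    intro i _ x hx
    rw [runMaxAbs_eq_sup' _ hn]
    refine sup'_congr _ rfl fun k hk => ?_
    refine congrArg abs (sum_congr rfl fun j hj => ?_)
    rw [rademacher_eq_dyadicSign ((mem_Icc.mp hj).2.trans (mem_Icc.mp hk).2) (by simpa using hx)]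
  rw [integral_zero_one_eq_sum_div (by positivity) _ hstep, div_le_iff₀ (by positivity)]
  have hbound := sum_runMaxAbs_dyadicSum_le n a
  push_cast
  linarith
end

section
/- Under the hypotheses of the discrete Sidon-type theorem (orthonormal system (φ_k) on [0,1] with φ_1 ≡ 1 satisfying conditions (1)–(3) with bound M, and n_1 = 1, m_{k-1} < n_k ≤ m_k), for all real numbers a_2,...,a_N and N ≥ 2: (1/M) Σ_{k=2}^N |a_k| ≤ ‖Σ_{k=2}^N a_k φ_{n_k}‖_∞ ≤ M Σ_{k=2}^N |a_k|. -/
/-!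
The upper bound is the triangle inequality. For the lower bound, `f = ∑ aₖ φ_{nₖ}` is tested
against the Riesz product `ψ = ∏_{k=2}^N (1 + sign(aₖ) φ_{nₖ} / M)`, which is nonnegative because
`|φₙ| ≤ M`. A function constant on the cells of the partition of `[0,1]` into `m k` intervals is,
by counting dimensions, a combination of `φ 1, …, φ (m k)`. As `m (k-1) < nₖ`, `φ_{nₖ}` is
therefore orthogonal to every product of the `φ_{nⱼ}` with `j < k`, and `∫ φₙ² φⱼ = 0` for
`2 ≤ j ≤ m k < n` makes `φ_{nₖ}²` act on such products like `φ 1 = 1`. Expanding `ψ` one factor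
at a time gives `∫ ψ = 1` and `∫ φ_{nₖ} ψ = sign(aₖ) / M`, whence
`(1/M) ∑ |aₖ| = ∫ f ψ ≤ ‖f‖_∞ ∫ ψ = ‖f‖_∞`.
-/

open Real MeasureTheory

/-- L¹ norm of `f` on `(0,1)`. -/
noncomputable def l1Norm01 (f : ℝ → ℝ) : ℝ := ∫ x in (0:ℝ)..1, |f x|

/-- Essential supremum of `|f|` on `[0,1]`. -/
noncomputable def essSupNorm01 (f : ℝ → ℝ) : ℝ :=
  essSup (fun x => |f x|) (volume.restrict (Set.Icc (0:ℝ) 1))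

open Filter Finset
open scoped Interval

theorem essSupNorm01_le {f : ℝ → ℝ} {c : ℝ}
    (h : ∀ᵐ x ∂volume.restrict (Set.Icc (0 : ℝ) 1), |f x| ≤ c) : essSupNorm01 f ≤ c := by
  have : (ae (volume.restrict (Set.Icc (0 : ℝ) 1))).NeBot := by
    rw [ae_neBot, Ne, Measure.restrict_eq_zero, Real.volume_Icc]
    norm_num
  exact essSup_le_of_ae_le c h
    (isCoboundedUnder_le_of_eventually_le _ (Eventually.of_forall fun x => abs_nonneg (f x)))

theorem essSupNorm01_sum_le {ι : Type*} (s : Finset ι) (a : ι → ℝ) {g : ι → ℝ → ℝ} {M : ℝ}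
    (hg : ∀ᵐ x ∂volume.restrict (Set.Icc (0 : ℝ) 1), ∀ k ∈ s, |g k x| ≤ M) :
    essSupNorm01 (fun x => ∑ k ∈ s, a k * g k x) ≤ M * ∑ k ∈ s, |a k| := by
  refine essSupNorm01_le (hg.mono fun x hx => ?_)
  calc |∑ k ∈ s, a k * g k x| ≤ ∑ k ∈ s, |a k| * |g k x| :=
        (abs_sum_le_sum_abs _ _).trans_eq (sum_congr rfl fun k _ => abs_mul _ _)
    _ ≤ ∑ k ∈ s, |a k| * M := sum_le_sum fun k hk => by gcongr; exact hx k hk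
    _ = M * ∑ k ∈ s, |a k| := by rw [← sum_mul, mul_comm]

theorem ae_restrict_Icc_of_forall_cell {n : ℕ} (hn : 0 < n) {p : ℝ → Prop}
    (h : ∀ i < n, ∀ x ∈ Set.Ioo ((i : ℝ) / n) ((i + 1) / n), p x) :
    ∀ᵐ x ∂volume.restrict (Set.Icc (0 : ℝ) 1), p x := by
  have hn' : (0 : ℝ) < n := by exact_mod_cast hn
  have hgrid : ∀ᵐ x ∂volume.restrict (Set.Icc (0 : ℝ) 1), x ∉ Set.range fun j : ℕ => (j : ℝ) / n :=
    ae_restrict_of_ae ((Set.countable_range _).ae_notMem volume)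
  filter_upwards [hgrid, ae_restrict_mem measurableSet_Icc] with x hx ⟨hx0, hx1⟩
  have hoff : ∀ j : ℕ, (j : ℝ) ≠ x * n := fun j hj =>
    hx ⟨j, show (j : ℝ) / n = x by rw [hj, mul_div_cancel_right₀ x hn'.ne']⟩
  set i := ⌊x * n⌋₊
  have hi : (i : ℝ) < x * n := (Nat.floor_le (by positivity)).lt_of_ne (hoff i)
  have hi' : x * n < i + 1 := Nat.lt_floor_add_one _
  refine h i ?_ x ⟨(div_lt_iff₀ hn').2 hi, (lt_div_iff₀ hn').2 hi'⟩
  have : x * n < n := (mul_le_of_le_one_left hn'.le hx1).lt_of_ne (by simpa using (hoff n).symm)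
  exact_mod_cast hi.trans this

def IsUniformStep (n : ℕ) (f : ℝ → ℝ) : Prop :=
  ∀ i < n, ∀ x ∈ Set.Ioo ((i : ℝ) / n) ((i + 1) / n), f x = f ((i + 2⁻¹) / n)

noncomputable def cellSample (n : ℕ) (f : ℝ → ℝ) : EuclideanSpace ℝ (Fin n) :=
  WithLp.toLp 2 fun i => f ((i + 2⁻¹) / n) / √n

namespace IsUniformStep

variable {n : ℕ} {f g : ℝ → ℝ}

theorem mid_mem {i : ℕ} (hi : i < n) :
    ((i : ℝ) + 2⁻¹) / n ∈ Set.Ioo ((i : ℝ) / n) ((i + 1) / n) := by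
  have hn : (0 : ℝ) < n := by exact_mod_cast hi.trans_le' (Nat.zero_le i)
  constructor <;> gcongr <;> norm_num

theorem of_forall_Ioo
    (h : ∀ i, 1 ≤ i → i ≤ n → ∀ x ∈ Set.Ioo (((i : ℝ) - 1) / n) ((i : ℝ) / n),
      ∀ y ∈ Set.Ioo (((i : ℝ) - 1) / n) ((i : ℝ) / n), f x = f y) :
    IsUniformStep n f := by
  intro i hi x hx
  have hcell : Set.Ioo ((((i + 1 : ℕ) : ℝ) - 1) / n) (((i + 1 : ℕ) : ℝ) / n) =
      Set.Ioo ((i : ℝ) / n) ((i + 1) / n) := by push_cast; ring_nf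
  exact h (i + 1) le_add_self hi x (hcell ▸ hx) _ (hcell ▸ mid_mem hi)

theorem const (c : ℝ) : IsUniformStep n fun _ => c := fun _ _ _ _ => rfl

theorem comp (hf : IsUniformStep n f) (u : ℝ → ℝ) : IsUniformStep n fun x => u (f x) :=
  fun i hi x hx => congrArg u (hf i hi x hx)

theorem mul (hf : IsUniformStep n f) (hg : IsUniformStep n g) :
    IsUniformStep n fun x => f x * g x :=
  fun i hi x hx => congrArg₂ (· * ·) (hf i hi x hx) (hg i hi x hx)

theorem finset_sum {ι : Type*} (s : Finset ι) {f : ι → ℝ → ℝ}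
    (hf : ∀ k ∈ s, IsUniformStep n (f k)) : IsUniformStep n fun x => ∑ k ∈ s, f k x :=
  fun i hi x hx => Finset.sum_congr rfl fun k hk => hf k hk i hi x hx

theorem finset_prod {ι : Type*} (s : Finset ι) {f : ι → ℝ → ℝ}
    (hf : ∀ k ∈ s, IsUniformStep n (f k)) : IsUniformStep n fun x => ∏ k ∈ s, f k x :=
  fun i hi x hx => Finset.prod_congr rfl fun k hk => hf k hk i hi x hx

theorem ae_eq_cell (hf : IsUniformStep n f) {i : ℕ} (hi : i < n) :
    f =ᵐ[volume.restrict (Ι ((i : ℝ) / n) ((i + 1) / n))] fun _ => f ((i + 2⁻¹) / n) := by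
  have hle : (i : ℝ) / n ≤ (i + 1) / n := (mid_mem hi).1.le.trans (mid_mem hi).2.le
  rw [Set.uIoc_of_le hle, ← Measure.restrict_congr_set Ioo_ae_eq_Ioc]
  exact (ae_restrict_mem measurableSet_Ioo).mono fun x hx => hf i hi x hx

theorem intervalIntegrable_cell (hf : IsUniformStep n f) {i : ℕ} (hi : i < n) :
    IntervalIntegrable f volume ((i : ℝ) / n) ((i + 1) / n) :=
  intervalIntegrable_const.congr_ae (hf.ae_eq_cell hi).symm

theorem integral_cell (hf : IsUniformStep n f) {i : ℕ} (hi : i < n) :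
    ∫ x in ((i : ℝ) / n)..((i + 1) / n), f x = f ((i + 2⁻¹) / n) / n := by
  rw [intervalIntegral.integral_congr_ae_restrict (hf.ae_eq_cell hi),
    intervalIntegral.integral_const, smul_eq_mul]
  ring

theorem intervalIntegrable (hf : IsUniformStep n f) (hn : 0 < n) :
    IntervalIntegrable f volume 0 1 := by
  have := IntervalIntegrable.trans_iterate (a := fun k : ℕ => (k : ℝ) / n) (n := n)
    fun k hk => by simpa using hf.intervalIntegrable_cell hk
  simpa [hn.ne'] using this

theorem integral_eq_sum (hf : IsUniformStep n f) (hn : 0 < n) :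
    ∫ x in (0 : ℝ)..1, f x = (∑ i ∈ range n, f ((i + 2⁻¹) / n)) / n := by
  have := intervalIntegral.sum_integral_adjacent_intervals (a := fun k : ℕ => (k : ℝ) / n)
    (n := n) (f := f) (μ := volume) fun k hk => by simpa using hf.intervalIntegrable_cell hk
  simp only [Nat.cast_add, Nat.cast_one, CharP.cast_eq_zero, zero_div,
    div_self (Nat.cast_ne_zero (R := ℝ) |>.2 hn.ne')] at this
  rw [← this, sum_div]
  exact sum_congr rfl fun i hi => hf.integral_cell (mem_range.1 hi)

theorem integral_finset_sum_mul (hf : IsUniformStep n f) (hn : 0 < n) {ι : Type*} (s : Finset ι)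
    (a : ι → ℝ) {g : ι → ℝ → ℝ} (hg : ∀ k ∈ s, IsUniformStep n (g k)) :
    ∫ x in (0 : ℝ)..1, (∑ k ∈ s, a k * g k x) * f x =
      ∑ k ∈ s, a k * ∫ x in (0 : ℝ)..1, g k x * f x := by
  simp only [sum_mul, mul_assoc]
  rw [intervalIntegral.integral_finsetSum fun k hk =>
    (((hg k hk).mul hf).intervalIntegrable hn).const_mul _]
  exact sum_congr rfl fun k _ => intervalIntegral.integral_const_mul _ _

theorem ae_abs_le_essSupNorm01 (hf : IsUniformStep n f) (hn : 0 < n) :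
    ∀ᵐ x ∂volume.restrict (Set.Icc (0 : ℝ) 1), |f x| ≤ essSupNorm01 f := by
  refine ae_le_essSup (isBoundedUnder_of_eventually_le (a := ∑ i ∈ range n, |f ((i + 2⁻¹) / n)|)
    (ae_restrict_Icc_of_forall_cell hn fun i hi x hx => ?_))
  rw [hf i hi x hx]
  exact single_le_sum (f := fun i : ℕ => |f ((i + 2⁻¹) / n)|) (fun _ _ => abs_nonneg _)
    (mem_range.2 hi)

theorem integral_mul_le (hf : IsUniformStep n f) (hg : IsUniformStep n g) (hn : 0 < n)
    (hg0 : ∀ᵐ x ∂volume.restrict (Set.Icc (0 : ℝ) 1), 0 ≤ g x) :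
    ∫ x in (0 : ℝ)..1, f x * g x ≤ essSupNorm01 f * ∫ x in (0 : ℝ)..1, g x := by
  rw [← intervalIntegral.integral_const_mul]
  refine intervalIntegral.integral_mono_ae_restrict zero_le_one
    ((hf.mul hg).intervalIntegrable hn) (((const _).mul hg).intervalIntegrable hn) ?_
  filter_upwards [hf.ae_abs_le_essSupNorm01 hn, hg0] with x hfx hgx
  exact mul_le_mul_of_nonneg_right ((le_abs_self _).trans hfx) hgx

theorem inner_cellSample (hf : IsUniformStep n f) (hg : IsUniformStep n g) (hn : 0 < n) :
    inner ℝ (cellSample n f) (cellSample n g) = ∫ x in (0 : ℝ)..1, f x * g x := by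
  have hn' : (0 : ℝ) ≤ n := Nat.cast_nonneg n
  rw [(hf.mul hg).integral_eq_sum hn, PiLp.inner_apply, ← Fin.sum_univ_eq_sum_range, sum_div]
  refine sum_congr rfl fun i _ => ?_
  simp only [cellSample, PiLp.toLp_apply, RCLike.inner_apply, conj_trivial]
  rw [div_mul_div_comm, Real.mul_self_sqrt hn', mul_comm]

theorem eq_sum_integral_mul_of_orthonormal {u : Fin n → ℝ → ℝ} (hu : ∀ j, IsUniformStep n (u j))
    (horth : ∀ j j', ∫ x in (0 : ℝ)..1, u j x * u j' x = if j = j' then 1 else 0)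
    (hg : IsUniformStep n g) :
    ∀ i < n, ∀ x ∈ Set.Ioo ((i : ℝ) / n) ((i + 1) / n),
      g x = ∑ j, (∫ y in (0 : ℝ)..1, u j y * g y) * u j x := by
  intro i hi x hx
  have hn : 0 < n := hi.trans_le' (Nat.zero_le i)
  have : Nonempty (Fin n) := ⟨⟨i, hi⟩⟩
  have hon : Orthonormal ℝ fun j => cellSample n (u j) :=
    orthonormal_iff_ite.2 fun j j' => by rw [inner_cellSample (hu j) (hu j') hn, horth]
  -- `n` orthonormal vectors in `ℝⁿ` form a basis
  let b := OrthonormalBasis.mk hon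
    (hon.linearIndependent.span_eq_top_of_card_eq_finrank (by simp)).ge
  have hexp := congrArg (fun v => v ⟨i, hi⟩) (b.sum_repr' (cellSample n g))
  simp only [b, OrthonormalBasis.coe_mk, inner_cellSample (hu _) hg hn] at hexp
  simp only [WithLp.ofLp_sum, WithLp.ofLp_smul, Finset.sum_apply, Pi.smul_apply, cellSample,
    smul_eq_mul, PiLp.toLp_apply] at hexp
  have hsqrt : √(n : ℝ) ≠ 0 := (Real.sqrt_pos.2 (Nat.cast_pos.2 hn)).ne'
  simp only [← mul_div_assoc, ← sum_div, div_left_inj' hsqrt] at hexp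
  rw [hg i hi x hx, ← hexp]
  exact sum_congr rfl fun j _ => by rw [hu j i hi x hx]

theorem integral_mul_eq_sum_of_orthonormal (hn : 0 < n)
    {u : Fin n → ℝ → ℝ} (hu : ∀ j, IsUniformStep n (u j))
    (horth : ∀ j j', ∫ x in (0 : ℝ)..1, u j x * u j' x = if j = j' then 1 else 0)
    {h : ℝ → ℝ} (hg : IsUniformStep n g)
    (hint : ∀ j, IntervalIntegrable (fun x => h x * u j x) volume 0 1) :
    ∫ x in (0 : ℝ)..1, h x * g x =
      ∑ j, (∫ y in (0 : ℝ)..1, u j y * g y) * ∫ x in (0 : ℝ)..1, h x * u j x := by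
  have hexp : ∀ᵐ x ∂volume.restrict (Ι (0 : ℝ) 1),
      h x * g x = ∑ j, (∫ y in (0 : ℝ)..1, u j y * g y) * (h x * u j x) := by
    rw [Set.uIoc_of_le zero_le_one]
    refine ae_restrict_of_ae_restrict_of_subset Set.Ioc_subset_Icc_self
      (ae_restrict_Icc_of_forall_cell hn fun i hi x hx => ?_)
    rw [hg.eq_sum_integral_mul_of_orthonormal hu horth i hi x hx, mul_sum]
    exact sum_congr rfl fun j _ => by ring
  rw [intervalIntegral.integral_congr_ae_restrict hexp,
    intervalIntegral.integral_finsetSum fun j _ => (hint j).const_mul _]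
  exact sum_congr rfl fun j _ => intervalIntegral.integral_const_mul _ _

end IsUniformStep

noncomputable def rieszProduct (φ : ℕ → ℝ → ℝ) (nseq : ℕ → ℕ) (c : ℕ → ℝ) (N : ℕ) (x : ℝ) : ℝ :=
  ∏ k ∈ Finset.Icc 2 N, (1 + c k * φ (nseq k) x)

theorem rieszProduct_nonneg {φ : ℕ → ℝ → ℝ} {nseq : ℕ → ℕ} {c : ℕ → ℝ} {N : ℕ} {x M : ℝ}
    (hc : ∀ k ∈ Finset.Icc 2 N, |c k| * M ≤ 1)
    (hφ : ∀ k ∈ Finset.Icc 2 N, |φ (nseq k) x| ≤ M) : 0 ≤ rieszProduct φ nseq c N x := by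
  refine prod_nonneg fun k hk => ?_
  have : |c k * φ (nseq k) x| ≤ 1 := by
    rw [abs_mul]
    exact (mul_le_mul_of_nonneg_left (hφ k hk) (abs_nonneg _)).trans (hc k hk)
  linarith [neg_abs_le (c k * φ (nseq k) x)]

namespace DiscreteSidon

variable {m : ℕ → ℕ} {φ : ℕ → ℝ → ℝ} {nseq : ℕ → ℕ}
  (hm1 : m 1 = 1) (hmono : ∀ k, 1 ≤ k → m k < m (k + 1)) (hφ1 : ∀ x, φ 1 x = 1)
  (horth : ∀ i j, 1 ≤ i → 1 ≤ j →
    (∫ x in (0 : ℝ)..1, φ i x * φ j x) = if i = j then 1 else 0)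
  (hstep : ∀ k, 1 ≤ k → ∀ j, 1 ≤ j → j ≤ m k → ∀ i, 1 ≤ i → i ≤ m k →
    ∀ x ∈ Set.Ioo (((i : ℝ) - 1) / (m k)) ((i : ℝ) / (m k)),
      ∀ y ∈ Set.Ioo (((i : ℝ) - 1) / (m k)) ((i : ℝ) / (m k)), φ j x = φ j y)
  (horth2 : ∀ k, 2 ≤ k → ∀ n, m k < n → ∀ j, 2 ≤ j → j ≤ m k →
    (∫ x in (0 : ℝ)..1, (φ n x) ^ 2 * φ j x) = 0)
  (hnk : ∀ k, 2 ≤ k → m (k - 1) < nseq k ∧ nseq k ≤ m k)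

include hmono in
theorem m_le_m {j k : ℕ} (hj : 1 ≤ j) (hjk : j ≤ k) : m j ≤ m k := by
  induction k, hjk using Nat.le_induction with
  | base => exact le_rfl
  | succ k hjk ih => exact ih.trans (hmono k (hj.trans hjk)).le

include hm1 hmono in
theorem self_le_m {k : ℕ} (hk : 1 ≤ k) : k ≤ m k := by
  induction k, hk using Nat.le_induction with
  | base => exact hm1.ge
  | succ k hk ih => exact Nat.succ_le_of_lt (ih.trans_lt (hmono k hk))

include hm1 hmono in
theorem one_le_m {k : ℕ} (hk : 1 ≤ k) : 1 ≤ m k :=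
  hk.trans (self_le_m hm1 hmono hk)

include hstep in
theorem isUniformStep_phi {j K : ℕ} (hK : 1 ≤ K) (hj : 1 ≤ j) (hjK : j ≤ m K) :
    IsUniformStep (m K) (φ j) :=
  IsUniformStep.of_forall_Ioo (hstep K hK j hj hjK)

include hm1 hmono horth hstep in
theorem integral_mul_eq_sum {k : ℕ} (hk : 1 ≤ k) {g h : ℝ → ℝ} (hg : IsUniformStep (m k) g)
    (hint : ∀ j, 1 ≤ j → j ≤ m k → IntervalIntegrable (fun x => h x * φ j x) volume 0 1) :
    ∫ x in (0 : ℝ)..1, h x * g x = ∑ j : Fin (m k),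
      (∫ y in (0 : ℝ)..1, φ (j + 1) y * g y) * ∫ x in (0 : ℝ)..1, h x * φ (j + 1) x := by
  refine IsUniformStep.integral_mul_eq_sum_of_orthonormal (one_le_m hm1 hmono hk)
    (fun j => isUniformStep_phi hstep hk le_add_self j.isLt) (fun j j' => ?_) hg
    (fun j => hint _ le_add_self j.isLt)
  rw [horth _ _ le_add_self le_add_self]
  simp [Fin.ext_iff]

include hm1 hmono horth hstep in
theorem integral_mul_eq_zero {k n : ℕ} (hk : 1 ≤ k) (hkn : m k < n) {g : ℝ → ℝ}
    (hg : IsUniformStep (m k) g) : ∫ x in (0 : ℝ)..1, φ n x * g x = 0 := by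
  have hn : 1 ≤ n := (one_le_m hm1 hmono hk).trans hkn.le
  have hkn' : k ≤ n := (self_le_m hm1 hmono hk).trans hkn.le
  have hφn : IsUniformStep (m n) (φ n) := isUniformStep_phi hstep hn hn (self_le_m hm1 hmono hn)
  rw [integral_mul_eq_sum hm1 hmono horth hstep hk hg fun j hj hjk =>
    (hφn.mul (isUniformStep_phi hstep hn hj (hjk.trans (m_le_m hmono hk hkn')))).intervalIntegrable
      (one_le_m hm1 hmono hn)]
  refine sum_eq_zero fun j _ => ?_
  rw [horth _ _ hn le_add_self, if_neg (by omega), mul_zero]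

include hm1 hmono hφ1 horth hstep horth2 in
theorem integral_sq_mul {k n : ℕ} (hk : 1 ≤ k) (hkn : m k < n) {g : ℝ → ℝ}
    (hg : IsUniformStep (m k) g) :
    ∫ x in (0 : ℝ)..1, φ n x ^ 2 * g x = ∫ x in (0 : ℝ)..1, g x := by
  have hn : 1 ≤ n := (one_le_m hm1 hmono hk).trans hkn.le
  have hkn' : k ≤ n := (self_le_m hm1 hmono hk).trans hkn.le
  have hφn : IsUniformStep (m n) (φ n) := isUniformStep_phi hstep hn hn (self_le_m hm1 hmono hn)
  rw [integral_mul_eq_sum hm1 hmono horth hstep hk hg fun j hj hjk =>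
    ((hφn.mul hφn).mul (isUniformStep_phi hstep hn hj
      (hjk.trans (m_le_m hmono hk hkn')))).intervalIntegrable (one_le_m hm1 hmono hn) |>.congr
      (fun x _ => by ring),
    sum_eq_single ⟨0, one_le_m hm1 hmono hk⟩]
  · simp only [zero_add, hφ1, one_mul, mul_one, sq, horth n n hn hn, if_true]
  · rintro ⟨j, hj⟩ _ hj0
    have hj1 : 1 ≤ j := Nat.one_le_iff_ne_zero.2 fun h => hj0 (Fin.ext h)
    have hk2 : 2 ≤ k := hk.lt_of_ne (by rintro rfl; omega)
    rw [horth2 k hk2 n hkn (j + 1) (by omega) hj, mul_zero]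
  · exact fun h => absurd (mem_univ _) h

include hmono hstep hnk in
theorem isUniformStep_phi_nseq {k K : ℕ} (hk : 2 ≤ k) (hkK : k ≤ K) :
    IsUniformStep (m K) (φ (nseq k)) :=
  isUniformStep_phi hstep (by omega) (by have := (hnk k hk).1; omega)
    ((hnk k hk).2.trans (m_le_m hmono (by omega) hkK))

include hmono hstep hnk in
theorem isUniformStep_rieszProduct (c : ℕ → ℝ) {N K : ℕ} (hNK : N ≤ K) :
    IsUniformStep (m K) (rieszProduct φ nseq c N) :=
  IsUniformStep.finset_prod _ fun k hk =>
    (isUniformStep_phi_nseq hmono hstep hnk (mem_Icc.1 hk).1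
      ((mem_Icc.1 hk).2.trans hNK)).comp fun t => 1 + c k * t

include hm1 hmono hstep hnk in
theorem integral_mul_rieszProduct_succ (c : ℕ → ℝ) {N : ℕ} (hN : 1 ≤ N) {h : ℝ → ℝ}
    (hh : IsUniformStep (m (N + 1)) h) :
    ∫ x in (0 : ℝ)..1, h x * rieszProduct φ nseq c (N + 1) x =
      (∫ x in (0 : ℝ)..1, h x * rieszProduct φ nseq c N x) +
        c (N + 1) * ∫ x in (0 : ℝ)..1, φ (nseq (N + 1)) x * (h x * rieszProduct φ nseq c N x) := by
  have hψ := hh.mul (isUniformStep_rieszProduct hmono hstep hnk c N.le_succ)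
  have hφ := isUniformStep_phi_nseq hmono hstep hnk (by omega : 2 ≤ N + 1) le_rfl
  have hm : 0 < m (N + 1) := one_le_m hm1 hmono (by omega)
  rw [← intervalIntegral.integral_const_mul, ← intervalIntegral.integral_add
    (hψ.intervalIntegrable hm) (((IsUniformStep.const _).mul (hφ.mul hψ)).intervalIntegrable hm)]
  refine intervalIntegral.integral_congr fun x _ => ?_
  simp only [rieszProduct, prod_Icc_succ_top (by omega : 2 ≤ N + 1)]
  ring

include hm1 hmono horth hstep hnk in
theorem integral_rieszProduct (c : ℕ → ℝ) {N : ℕ} (hN : 1 ≤ N) :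
    ∫ x in (0 : ℝ)..1, rieszProduct φ nseq c N x = 1 := by
  induction N, hN using Nat.le_induction with
  | base => simp [rieszProduct]
  | succ N hN ih =>
    have h := integral_mul_rieszProduct_succ hm1 hmono hstep hnk c hN (IsUniformStep.const 1)
    simp only [one_mul] at h
    rw [h, ih, integral_mul_eq_zero hm1 hmono horth hstep hN (hnk (N + 1) (by omega)).1
      (isUniformStep_rieszProduct hmono hstep hnk c le_rfl), mul_zero, add_zero]

include hm1 hmono hφ1 horth hstep horth2 hnk in
theorem integral_phi_mul_rieszProduct (c : ℕ → ℝ) {j N : ℕ} (hj : 2 ≤ j) (hjN : j ≤ N) :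
    ∫ x in (0 : ℝ)..1, φ (nseq j) x * rieszProduct φ nseq c N x = c j := by
  induction N, hjN using Nat.le_induction with
  | base =>
    obtain ⟨N, rfl⟩ : ∃ N, j = N + 1 := ⟨j - 1, by omega⟩
    have hN : 1 ≤ N := by omega
    have hψ := isUniformStep_rieszProduct hmono hstep hnk c (le_refl N)
    rw [integral_mul_rieszProduct_succ hm1 hmono hstep hnk c hN
        (isUniformStep_phi_nseq hmono hstep hnk hj le_rfl),
      integral_mul_eq_zero hm1 hmono horth hstep hN (hnk _ hj).1 hψ]
    simp_rw [← mul_assoc, ← sq]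
    rw [integral_sq_mul hm1 hmono hφ1 horth hstep horth2 hN (hnk _ hj).1 hψ,
      integral_rieszProduct hm1 hmono horth hstep hnk c hN, zero_add, mul_one]
  | succ N hjN ih =>
    have hN : 1 ≤ N := by omega
    rw [integral_mul_rieszProduct_succ hm1 hmono hstep hnk c hN
        (isUniformStep_phi_nseq hmono hstep hnk hj (by omega)), ih,
      integral_mul_eq_zero hm1 hmono horth hstep hN (hnk (N + 1) (by omega)).1
        ((isUniformStep_phi_nseq hmono hstep hnk hj hjN).mul
          (isUniformStep_rieszProduct hmono hstep hnk c le_rfl)), mul_zero, add_zero]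

end DiscreteSidon

open DiscreteSidon

theorem discrete_sidon_two_sided_general (m : ℕ → ℕ) (hm1 : m 1 = 1)
    (hmono : ∀ k, 1 ≤ k → m k < m (k+1))
    (φ : ℕ → ℝ → ℝ) (hφ1 : ∀ x, φ 1 x = 1)
    (horth : ∀ i j, 1 ≤ i → 1 ≤ j →
      (∫ x in (0:ℝ)..1, φ i x * φ j x) = if i = j then 1 else 0)
    (hstep : ∀ k, 1 ≤ k → ∀ j, 1 ≤ j → j ≤ m k → ∀ i, 1 ≤ i → i ≤ m k →
      ∀ x ∈ Set.Ioo (((i:ℝ)-1)/(m k)) ((i:ℝ)/(m k)),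
        ∀ y ∈ Set.Ioo (((i:ℝ)-1)/(m k)) ((i:ℝ)/(m k)), φ j x = φ j y)
    (horth2 : ∀ k, 2 ≤ k → ∀ n, m k < n → ∀ j, 2 ≤ j → j ≤ m k →
      (∫ x in (0:ℝ)..1, (φ n x)^2 * φ j x) = 0)
    (M : ℝ) (hM : 0 < M) (hbound : ∀ n, 1 ≤ n → essSupNorm01 (φ n) ≤ M)
    (nseq : ℕ → ℕ)
    (hnk : ∀ k, 2 ≤ k → m (k-1) < nseq k ∧ nseq k ≤ m k)
    (N : ℕ) (hN : 2 ≤ N) (a : ℕ → ℝ) :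
    (1/M) * ∑ k ∈ Finset.Icc 2 N, |a k| ≤
        essSupNorm01 (fun x => ∑ k ∈ Finset.Icc 2 N, a k * φ (nseq k) x) ∧
      essSupNorm01 (fun x => ∑ k ∈ Finset.Icc 2 N, a k * φ (nseq k) x) ≤
        M * ∑ k ∈ Finset.Icc 2 N, |a k| := by
  have hmN : 0 < m N := one_le_m hm1 hmono (by omega)
  have hφ : ∀ k ∈ Finset.Icc 2 N, IsUniformStep (m N) (φ (nseq k)) := fun k hk =>
    isUniformStep_phi_nseq hmono hstep hnk (mem_Icc.1 hk).1 (mem_Icc.1 hk).2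
  have hφM : ∀ᵐ x ∂volume.restrict (Set.Icc (0 : ℝ) 1), ∀ k ∈ Finset.Icc 2 N,
      |φ (nseq k) x| ≤ M :=
    (eventually_all_finset _).2 fun k hk => ((hφ k hk).ae_abs_le_essSupNorm01 hmN).mono
      fun x hx => hx.trans (hbound _ (by have := (hnk k (mem_Icc.1 hk).1).1; omega))
  set c := fun k => (SignType.sign (a k) : ℝ) / M
  have hc : ∀ k ∈ Finset.Icc 2 N, |c k| * M ≤ 1 := fun k _ => by
    rw [abs_div, abs_of_pos hM, div_mul_cancel₀ _ hM.ne']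
    rcases SignType.sign (a k) with _ | _ | _ <;> simp
  set ψ := rieszProduct φ nseq c N
  have hψ : IsUniformStep (m N) ψ := isUniformStep_rieszProduct hmono hstep hnk c le_rfl
  refine ⟨?_, essSupNorm01_sum_le _ a hφM⟩
  calc (1 / M) * ∑ k ∈ Finset.Icc 2 N, |a k|
      = ∑ k ∈ Finset.Icc 2 N, a k * ∫ x in (0 : ℝ)..1, φ (nseq k) x * ψ x := by
        rw [mul_sum]
        refine sum_congr rfl fun k hk => ?_
        rw [integral_phi_mul_rieszProduct hm1 hmono hφ1 horth hstep horth2 hnk c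
          (mem_Icc.1 hk).1 (mem_Icc.1 hk).2, mul_div_assoc', self_mul_sign, one_div_mul_eq_div]
    _ = ∫ x in (0 : ℝ)..1, (∑ k ∈ Finset.Icc 2 N, a k * φ (nseq k) x) * ψ x :=
        (hψ.integral_finset_sum_mul hmN _ a hφ).symm
    _ ≤ essSupNorm01 (fun x => ∑ k ∈ Finset.Icc 2 N, a k * φ (nseq k) x) * ∫ x in (0 : ℝ)..1, ψ x :=
        (IsUniformStep.finset_sum _ fun k hk => (hφ k hk).comp (a k * ·)).integral_mul_le hψ hmN
          (hφM.mono fun x hx => rieszProduct_nonneg hc hx)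
    _ = essSupNorm01 (fun x => ∑ k ∈ Finset.Icc 2 N, a k * φ (nseq k) x) := by
        rw [integral_rieszProduct hm1 hmono horth hstep hnk c (by omega), mul_one]

/-- Two-sided Sidon-type inequality for discrete orthonormal systems. -/
theorem discrete_sidon_two_sided (m : ℕ → ℕ) (hm1 : m 1 = 1)
    (hmono : ∀ k, 1 ≤ k → m k < m (k+1))
    (φ : ℕ → ℝ → ℝ) (hφ1 : ∀ x, φ 1 x = 1)
    (horth : ∀ i j, 1 ≤ i → 1 ≤ j →
      (∫ x in (0:ℝ)..1, φ i x * φ j x) = if i = j then 1 else 0)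
    (hstep : ∀ k, 1 ≤ k → ∀ j, 1 ≤ j → j ≤ m k → ∀ i, 1 ≤ i → i ≤ m k →
      ∀ x ∈ Set.Ioo (((i:ℝ)-1)/(m k)) ((i:ℝ)/(m k)),
        ∀ y ∈ Set.Ioo (((i:ℝ)-1)/(m k)) ((i:ℝ)/(m k)), φ j x = φ j y)
    (horth2 : ∀ k, 2 ≤ k → ∀ n, m k < n → ∀ j, 2 ≤ j → j ≤ m k →
      (∫ x in (0:ℝ)..1, (φ n x)^2 * φ j x) = 0)
    (M : ℝ) (hM : 0 < M) (hbound : ∀ n, 1 ≤ n → essSupNorm01 (φ n) ≤ M)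
    (nseq : ℕ → ℕ) (hn1 : nseq 1 = 1)
    (hnk : ∀ k, 2 ≤ k → m (k-1) < nseq k ∧ nseq k ≤ m k)
    (N : ℕ) (hN : 2 ≤ N) (a : ℕ → ℝ) :
    (1/M) * ∑ k ∈ Finset.Icc 2 N, |a k| ≤
        essSupNorm01 (fun x => ∑ k ∈ Finset.Icc 2 N, a k * φ (nseq k) x) ∧
      essSupNorm01 (fun x => ∑ k ∈ Finset.Icc 2 N, a k * φ (nseq k) x) ≤
        M * ∑ k ∈ Finset.Icc 2 N, |a k| :=
  discrete_sidon_two_sided_general m hm1 hmono φ hφ1 horth hstep horth2 M hM hbound nseq hnk N hN a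
end
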